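/- arXiv:2406.10516 — 3 statements merged into one kernel-verified Lean document; each statement's English description precedes it below -/
import Mathlib

section
/- Let K be a field and D a natural number. Let A be a commutative graded K-algebra with top degree D and B a commutative graded K-algebra with top degree D+2. Let f : A → B be a K-algebra homomorphism with f(A_i) ⊆ B_i for all i, and let g : B → A be a K-linear map with g(B_0) = g(B_1) = 0 and g(B_{i+2}) ⊆ A_i for all i, satisfying the projection formula g(f(a)·b) = a·g(b) for all a ∈ A and b ∈ B. Assume: (i) there exist ψ ∈ B_2 and a nonzero scalar c ∈ K such that g(f(a)·ψ) = c·a for all a ∈ A; and (ii) the restriction of g to B_{D+2} → A_D is injective. Fix k ≤ D. If there exists a nonzero β ∈ A_k with β·γ = 0 for all γ ∈ A_{D−k}, then f(β) ∈ B_k is nonzero and f(β)·δ = 0 for all δ ∈ B_{D+2−k}. In particular, if some degree pairing of A fails to be left-nondegenerate, then some degree pairing of B fails to be left-nondegenerate. -/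
/-- A commutative graded `K`-algebra structure on `A` with graded pieces `𝒜 i`
and top degree `D`: the `𝒜 i` form an internal direct sum, `1 ∈ 𝒜 0`,
`𝒜 i * 𝒜 j ⊆ 𝒜 (i + j)`, and `𝒜 i = 0` for `i > D`. -/
def IsGradedTop (K : Type*) [Field K] {A : Type*} [CommRing A] [Algebra K A]
    (𝒜 : ℕ → Submodule K A) (D : ℕ) : Prop :=
  DirectSum.IsInternal 𝒜 ∧ (1 : A) ∈ 𝒜 0 ∧
    (∀ i j : ℕ, ∀ a ∈ 𝒜 i, ∀ b ∈ 𝒜 j, a * b ∈ 𝒜 (i + j)) ∧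
    ∀ i : ℕ, D < i → 𝒜 i = ⊥

/-- Abstract form of Lemma 2.2: `f` plays the role of the pullback `π^*` along the
forgetful map and `g` the pushforward `π_*` (lowering degree by 2, satisfying the
projection formula, `π_*(π^*α · ψ) = c·α` with `c = 2g-2+n ≠ 0`, and injective in
top degree). If the degree-`k` pairing of `A` is not left-nondegenerate, then the
degree-`k` pairing of `B` is not left-nondegenerate. -/
theorem statement1 {K : Type*} [Field K] {A B : Type*}
    [CommRing A] [Algebra K A] [CommRing B] [Algebra K B]
    (D : ℕ) (𝒜 : ℕ → Submodule K A) (ℬ : ℕ → Submodule K B)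
    (hA : IsGradedTop K 𝒜 D) (hB : IsGradedTop K ℬ (D + 2))
    (f : A →ₐ[K] B) (hf : ∀ i : ℕ, ∀ a ∈ 𝒜 i, f a ∈ ℬ i)
    (g : B →ₗ[K] A)
    (hg0 : ∀ b ∈ ℬ 0, g b = 0) (hg1 : ∀ b ∈ ℬ 1, g b = 0)
    (hg : ∀ i : ℕ, ∀ b ∈ ℬ (i + 2), g b ∈ 𝒜 i)
    (hproj : ∀ (a : A) (b : B), g (f a * b) = a * g b)
    (hψ : ∃ ψ ∈ ℬ 2, ∃ c : K, c ≠ 0 ∧ ∀ a : A, g (f a * ψ) = c • a)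
    (hinj : ∀ b ∈ ℬ (D + 2), g b = 0 → b = 0)
    (k : ℕ) (hk : k ≤ D)
    (β : A) (hβmem : β ∈ 𝒜 k) (hβne : β ≠ 0)
    (hβ : ∀ γ ∈ 𝒜 (D - k), β * γ = 0) :
    f β ∈ ℬ k ∧ f β ≠ 0 ∧ ∀ δ ∈ ℬ (D + 2 - k), f β * δ = 0 := by
  obtain ⟨ψ, hψmem, c, hc, hcψ⟩ := hψ
  refine ⟨hf k β hβmem, ?_, ?_⟩
  · intro h
    have h2 := hcψ β
    rw [h, zero_mul, map_zero] at h2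
    exact hβne (by simpa [hc] using (smul_eq_zero.mp h2.symm))
  · intro δ hδ
    have hδ' : δ ∈ ℬ (D - k + 2) := by
      rwa [show D - k + 2 = D + 2 - k by omega]
    apply hinj
    · have := hB.2.2.1 k (D + 2 - k) (f β) (hf k β hβmem) δ hδ
      rwa [Nat.add_sub_cancel' (by omega : k ≤ D + 2)] at this
    · rw [hproj]
      exact hβ (g δ) (hg (D - k) δ hδ')
end

section
/- Let K be a field and D a natural number. Let A be a commutative graded K-algebra with top degree D, and let A[ε] denote the algebra of dual numbers over A (elements are uniquely of the form x + y·ε with x, y ∈ A and ε² = 0). Let C be a commutative graded K-algebra with top degree D+4. Let φ* : C → A[ε] be a K-algebra homomorphism and φ_* : A[ε] → C a K-linear map satisfying the projection formula φ_*(x·φ*(ζ)) = φ_*(x)·ζ for all x ∈ A[ε] and ζ ∈ C. Assume: (i) for every j and every ζ ∈ C_j, one has φ*(ζ) = a + a'·ε with a ∈ A_j and a' ∈ A_{j−2} (where A_i := 0 for i < 0 and i > D); (ii) φ_*(x + y·ε) ∈ C_{i+2} whenever x ∈ A_i and y ∈ A_{i−2}. Fix k ≤ D and suppose β ∈ A_k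 is nonzero and satisfies β·γ = 0 for all γ ∈ A_{D−k}. Suppose moreover that (iii) φ*(φ_*(β + 0·ε)) = β·u + c·β·ε for some u ∈ A_2 and some nonzero scalar c ∈ K. Then φ_*(β + 0·ε) ∈ C_{k+2} is nonzero and φ_*(β + 0·ε)·ζ = 0 for all ζ ∈ C_{D+2−k}. In particular, the degree-(k+2) pairing of C is not left-nondegenerate. -/
open TrivSqZeroExt

/-- Abstract form of Lemma 2.3 (genus induction): `A[ε]` (the dual numbers over `A`,
where an element is uniquely `inl x + inr y = x + y·ε` with `ε² = 0`) models
`H^*(M̄_{g,1}) ⊗ H^*(M̄_{1,1})`, `φ*` and `φ_*` pullback and pushforward along the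
elliptic-tail gluing map. Here `A_{j-2}` means `0` for `j < 2` (hence the extra
conjuncts `j < 2 → ⋯ = 0`), and `A_i = 0` for `i > D` is part of `IsGradedTop`.
If `β ∈ A_k` is nonzero and pairs to zero with all of `A_{D-k}`, then
`φ_*(β + 0·ε) ∈ C_{k+2}` is nonzero and pairs to zero with all of `C_{D+2-k}`;
in particular the degree-`(k+2)` pairing of `C` is not left-nondegenerate. -/
theorem statement2 {K : Type*} [Field K] {A C : Type*}
    [CommRing A] [Algebra K A] [CommRing C] [Algebra K C]
    (D : ℕ) (𝒜 : ℕ → Submodule K A) (𝒞 : ℕ → Submodule K C)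
    (hA : IsGradedTop K 𝒜 D) (hC : IsGradedTop K 𝒞 (D + 4))
    (φstar : C →ₐ[K] DualNumber A) (φpush : DualNumber A →ₗ[K] C)
    (hproj : ∀ (x : DualNumber A) (ζ : C), φpush (x * φstar ζ) = φpush x * ζ)
    (hstar_gr : ∀ j : ℕ, ∀ ζ ∈ 𝒞 j,
      fst (φstar ζ) ∈ 𝒜 j ∧ snd (φstar ζ) ∈ 𝒜 (j - 2) ∧ (j < 2 → snd (φstar ζ) = 0))
    (hpush_gr : ∀ i : ℕ, ∀ x y : A, x ∈ 𝒜 i → y ∈ 𝒜 (i - 2) → (i < 2 → y = 0) →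
      φpush (inl x + inr y) ∈ 𝒞 (i + 2))
    (k : ℕ) (hk : k ≤ D)
    (β : A) (hβmem : β ∈ 𝒜 k) (hβne : β ≠ 0)
    (hβ : ∀ γ ∈ 𝒜 (D - k), β * γ = 0)
    (hself : ∃ u ∈ 𝒜 2, ∃ c : K, c ≠ 0 ∧
      φstar (φpush (inl β)) = inl (β * u) + inr (c • β)) :
    φpush (inl β) ∈ 𝒞 (k + 2) ∧ φpush (inl β) ≠ 0 ∧
      ∀ ζ ∈ 𝒞 (D + 2 - k), φpush (inl β) * ζ = 0 := by
  obtain ⟨hAint, hA1, hAmul, hAtop⟩ := hA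
  refine ⟨?_, ?_, ?_⟩
  · have := hpush_gr k β 0 hβmem (Submodule.zero_mem _) (fun _ => rfl)
    simpa using this
  · obtain ⟨u, hu, c, hc, heq⟩ := hself
    intro h0
    rw [h0, map_zero] at heq
    have h2 : (0 : DualNumber A).snd = c • β := by rw [heq]; simp
    simp only [snd_zero] at h2
    rcases smul_eq_zero.mp h2.symm with h | h
    · exact hc h
    · exact hβne h
  · intro ζ hζ
    obtain ⟨ha, ha', -⟩ := hstar_gr _ ζ hζ
    have hβa : β * fst (φstar ζ) = 0 := by
      have hm : β * fst (φstar ζ) ∈ 𝒜 (k + (D + 2 - k)) := hAmul _ _ _ hβmem _ ha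
      have hD : k + (D + 2 - k) = D + 2 := by omega
      rw [hD, hAtop (D + 2) (by omega)] at hm
      simpa using hm
    have hβa' : β * snd (φstar ζ) = 0 := by
      apply hβ
      have : D + 2 - k - 2 = D - k := by omega
      rwa [this] at ha'
    have hz : (inl β : DualNumber A) * φstar ζ = 0 := by
      refine TrivSqZeroExt.ext ?_ ?_
      · simpa [fst_mul] using hβa
      · simp [snd_mul, smul_eq_mul, hβa', hβa]
    rw [← hproj, hz, map_zero]
end

section
/- Let K be a field and D, m natural numbers. Let A be a commutative graded K-algebra with top degree D and C a commutative graded K-algebra with top degree D+2m. Let S ⊆ A and T ⊆ C be K-subalgebras that are graded, i.e., S = ⊕_i (S ∩ A_i) and T = ⊕_i (T ∩ C_i). Let ξ* : C → A be a K-algebra homomorphism with ξ*(C_i) ⊆ A_i for all i and ξ*(T) ⊆ S, and let ξ_* : A → C be a K-linear map with ξ_*(A_i) ⊆ C_{i+2m} for all i and ξ_*(S) ⊆ T, satisfying the projection formula ξ_*(x·ξ*(ζ)) = ξ_*(x)·ζ for all x ∈ A and ζ ∈ C, and whose restriction A_D → C_{D+2m} is injective. Fix k ≤ D and suppose there exist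 α ∈ S ∩ A_k, b ∈ A_{D−k}, Z ∈ C_{D−k}, and a nonzero scalar c ∈ K such that: (i) α·s = 0 for all s ∈ S ∩ A_{D−k}; (ii) α·b ≠ 0; (iii) ξ*(Z) − c·b ∈ S ∩ A_{D−k}. Then ξ_*(α) ∈ T ∩ C_{k+2m} is nonzero and ξ_*(α)·t = 0 for all t ∈ T ∩ C_{D−k}. In particular, the pairing (T ∩ C_{k+2m}) × (T ∩ C_{D−k}) → C_{D+2m} induced by multiplication is not left-nondegenerate. -/
/-- Abstract form of Sections 3–4 of the paper: `A` models `H^*(M̄_{2,20})` with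
tautological subring `S`, `C` models `H^*(M̄_{g,2n₂})` with tautological subring `T`,
`ξ*`/`ξ_*` are pullback/pushforward along the iterated self-gluing map (raising
degree by `2m`). Gradedness of the subalgebras `S`, `T` is expressed as
`S = ⨆ i, (S ⊓ A_i)` as submodules. The class `α` pairs to zero with all
tautological classes of complementary degree but nontrivially with the (bielliptic)
class `b`, and `ξ*(Z) = c·b + (element of S)`. Conclusion: `ξ_*(α) ∈ T ∩ C_{k+2m}`
is nonzero but pairs to zero with all of `T ∩ C_{D-k}`, so the tautological
pairing of `C` is not left-nondegenerate. -/
theorem statement3 {K : Type*} [Field K] {A C : Type*}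
    [CommRing A] [Algebra K A] [CommRing C] [Algebra K C]
    (D m : ℕ) (𝒜 : ℕ → Submodule K A) (𝒞 : ℕ → Submodule K C)
    (hA : IsGradedTop K 𝒜 D) (hC : IsGradedTop K 𝒞 (D + 2 * m))
    (S : Subalgebra K A) (T : Subalgebra K C)
    (hS : Subalgebra.toSubmodule S = ⨆ i : ℕ, (Subalgebra.toSubmodule S ⊓ 𝒜 i))
    (hT : Subalgebra.toSubmodule T = ⨆ i : ℕ, (Subalgebra.toSubmodule T ⊓ 𝒞 i))
    (ξstar : C →ₐ[K] A)
    (hstar_gr : ∀ i : ℕ, ∀ ζ ∈ 𝒞 i, ξstar ζ ∈ 𝒜 i)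
    (hstar_T : ∀ ζ ∈ T, ξstar ζ ∈ S)
    (ξpush : A →ₗ[K] C)
    (hpush_gr : ∀ i : ℕ, ∀ a ∈ 𝒜 i, ξpush a ∈ 𝒞 (i + 2 * m))
    (hpush_S : ∀ a ∈ S, ξpush a ∈ T)
    (hproj : ∀ (x : A) (ζ : C), ξpush (x * ξstar ζ) = ξpush x * ζ)
    (hinj : ∀ a ∈ 𝒜 D, ξpush a = 0 → a = 0)
    (k : ℕ) (hk : k ≤ D)
    (α : A) (hαS : α ∈ S) (hαdeg : α ∈ 𝒜 k)
    (b : A) (hb : b ∈ 𝒜 (D - k))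
    (Z : C) (hZ : Z ∈ 𝒞 (D - k))
    (c : K) (hc : c ≠ 0)
    (hαtaut : ∀ s ∈ S, s ∈ 𝒜 (D - k) → α * s = 0)
    (hαb : α * b ≠ 0)
    (hpull : ξstar Z - c • b ∈ S ∧ ξstar Z - c • b ∈ 𝒜 (D - k)) :
    ξpush α ∈ T ∧ ξpush α ∈ 𝒞 (k + 2 * m) ∧ ξpush α ≠ 0 ∧
      ∀ t ∈ T, t ∈ 𝒞 (D - k) → ξpush α * t = 0 := by
  obtain ⟨hsS, hsA⟩ := hpull
  refine ⟨hpush_S α hαS, hpush_gr k α hαdeg, ?_, ?_⟩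
  · intro h0
    have key : α * ξstar Z = c • (α * b) := by
      have : α * ξstar Z = c • (α * b) + α * (ξstar Z - c • b) := by rw [mul_sub, mul_smul_comm]; abel
      rw [this, hαtaut _ hsS hsA, add_zero]
    have hmem : c • (α * b) ∈ 𝒜 D := by
      have := hA.2.2.1 k (D - k) α hαdeg b hb
      rw [Nat.add_sub_cancel' hk] at this
      exact Submodule.smul_mem _ _ this
    have hz : ξpush (α * ξstar Z) = 0 := by rw [hproj, h0, zero_mul]
    rw [key] at hz
    have := hinj _ hmem hz
    exact hαb (by simpa [hc] using smul_eq_zero.mp this)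
  · intro t htT htC
    rw [← hproj]
    have : α * ξstar t = 0 := hαtaut _ (hstar_T t htT) (hstar_gr _ t htC)
    rw [this, map_zero]
end
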